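/- arXiv:math-ph/0604007 — 3 statements merged into one kernel-verified Lean document; each statement's English description precedes it below -/
import Mathlib

section
/- Let q be a complex number with |q| < 1. Then the third order mock theta function \omega(q) satisfies \sum_{n=0}^{\infty} \frac{q^{2n(n+1)}}{[(q;q^2)_{n+1}]^2} = \sum_{n=0}^{\infty} \frac{q^n}{(q;q^2)_{n+1}}. -/
/-!
Writing `b = t = q` and passing to base `q²`, both sides are `(1 - q)⁻¹` times the two sides
of the case `a = 0` of the Rogers–Fine identity
`∑ tⁿ / (bq;q)ₙ = ∑ bⁿ tⁿ q^{n²} / ((bq;q)ₙ (t;q)ₙ₊₁)`.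
Both sides `F(b, t)` of that identity satisfy the functional equation
`(1 - t) F(b, t) = 1 + btq / (1 - bq) · F(bq, tq)`, so their difference `D k` at `(bqᵏ, tqᵏ)`
satisfies `D k = c k · D (k + 1)` with `c k → 0`. As `D k` is bounded uniformly in `k`
(through `|1 / (a;q)ₙ| ≤ exp (r / ((1 - r)(1 - |q|)))` for `|a| ≤ r < 1`), `D 0 = 0`.
-/

open scoped BigOperators

/-- The finite q-Pochhammer symbol `(a; q)_n = ∏_{k=0}^{n-1} (1 - a q^k)`. -/
noncomputable def qPoch (a q : ℂ) (n : ℕ) : ℂ :=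
  ∏ k ∈ Finset.range n, (1 - a * q ^ k)

open Finset Filter Topology

lemma norm_mul_le_left_of_norm_le_one {R : Type*} [NonUnitalSeminormedRing R] {a z : R}
    (hz : ‖z‖ ≤ 1) : ‖a * z‖ ≤ ‖a‖ :=
  (norm_mul_le a z).trans (mul_le_of_le_one_right (norm_nonneg a) hz)

lemma norm_pow_le_one_of_norm_le_one {z : ℂ} (hz : ‖z‖ ≤ 1) (k : ℕ) : ‖z ^ k‖ ≤ 1 := by
  rw [norm_pow]; exact pow_le_one₀ (norm_nonneg z) hz

lemma qPoch_succ (a q : ℂ) (n : ℕ) : qPoch a q (n + 1) = qPoch a q n * (1 - a * q ^ n) :=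
  prod_range_succ _ _

lemma qPoch_succ' (a q : ℂ) (n : ℕ) : qPoch a q (n + 1) = (1 - a) * qPoch (a * q) q n := by
  rw [qPoch, prod_range_succ', mul_comm]
  simp only [qPoch, pow_succ', pow_zero, mul_one, mul_assoc]

lemma qPoch_ne_zero {a q : ℂ} (ha : ‖a‖ < 1) (hq : ‖q‖ ≤ 1) (n : ℕ) : qPoch a q n ≠ 0 := by
  refine prod_ne_zero_iff.2 fun k _ h => ?_
  have : ‖a * q ^ k‖ < 1 :=
    (norm_mul_le_left_of_norm_le_one (norm_pow_le_one_of_norm_le_one hq k)).trans_lt ha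
  simp [← sub_eq_zero.1 h] at this

lemma norm_inv_qPoch_le {a q : ℂ} {r : ℝ} (ha : ‖a‖ ≤ r) (hr : r < 1) (hq : ‖q‖ < 1) (n : ℕ) :
    ‖(qPoch a q n)⁻¹‖ ≤ Real.exp (r / ((1 - r) * (1 - ‖q‖))) := by
  have hr0 : 0 ≤ r := (norm_nonneg a).trans ha
  have factor : ∀ k, ‖(1 - a * q ^ k)⁻¹‖ ≤ 1 + ‖a‖ * ‖q‖ ^ k / (1 - r) := by
    intro k
    have hu : ‖a‖ * ‖q‖ ^ k ≤ r :=
      (mul_le_of_le_one_right (norm_nonneg a) (pow_le_one₀ (norm_nonneg q) hq.le)).trans ha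
    have hu1 : 1 - ‖a‖ * ‖q‖ ^ k ≠ 0 := by linarith
    have hsub : 1 - ‖a‖ * ‖q‖ ^ k ≤ ‖1 - a * q ^ k‖ := by
      simpa using norm_sub_norm_le (1 : ℂ) (a * q ^ k)
    rw [norm_inv]
    calc ‖1 - a * q ^ k‖⁻¹ ≤ (1 - ‖a‖ * ‖q‖ ^ k)⁻¹ := inv_anti₀ (by linarith) hsub
      _ = 1 + ‖a‖ * ‖q‖ ^ k / (1 - ‖a‖ * ‖q‖ ^ k) := by field_simp; ring
      _ ≤ 1 + ‖a‖ * ‖q‖ ^ k / (1 - r) := by gcongr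
  have geom : ∑ k ∈ range n, ‖q‖ ^ k ≤ (1 - ‖q‖)⁻¹ := by
    simpa only [range_eq_Ico, pow_zero, one_div] using
      geom_sum_Ico_le_of_lt_one (m := 0) (n := n) (norm_nonneg q) hq
  calc ‖(qPoch a q n)⁻¹‖ = ∏ k ∈ range n, ‖(1 - a * q ^ k)⁻¹‖ := by
        rw [qPoch, ← prod_inv_distrib, norm_prod]
    _ ≤ ∏ k ∈ range n, (1 + ‖a‖ * ‖q‖ ^ k / (1 - r)) :=
        prod_le_prod (fun _ _ => norm_nonneg _) fun k _ => factor k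
    _ ≤ Real.exp (∑ k ∈ range n, ‖a‖ * ‖q‖ ^ k / (1 - r)) :=
        Real.prod_one_add_le_exp_sum _ fun k => div_nonneg (by positivity) (by linarith)
    _ ≤ Real.exp (r / ((1 - r) * (1 - ‖q‖))) := by
        have hr1 : 0 < 1 - r := by linarith
        have hq1 : 0 < 1 - ‖q‖ := by linarith
        gcongr
        calc ∑ k ∈ range n, ‖a‖ * ‖q‖ ^ k / (1 - r)
            = ‖a‖ / (1 - r) * ∑ k ∈ range n, ‖q‖ ^ k := by
              rw [mul_sum]; exact sum_congr rfl fun k _ => by ring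
          _ ≤ r / (1 - r) * (1 - ‖q‖)⁻¹ := by gcongr
          _ = r / ((1 - r) * (1 - ‖q‖)) := by field_simp

lemma norm_tsum_le_of_norm_le_geometric {E : Type*} [SeminormedAddCommGroup E] {f : ℕ → E}
    {C r : ℝ} (hr0 : 0 ≤ r) (hr1 : r < 1) (hf : ∀ n, ‖f n‖ ≤ C * r ^ n) :
    ‖∑' n, f n‖ ≤ C * (1 - r)⁻¹ :=
  tsum_of_norm_bounded ((hasSum_geometric_of_lt_one hr0 hr1).mul_left C) hf

lemma eq_zero_of_eq_mul_succ {R : Type*} [NormedRing R] {D c : ℕ → R}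
    (hrec : ∀ k, D k = c k * D (k + 1)) (hc : Tendsto c atTop (𝓝 0)) {M : ℝ}
    (hD : ∀ k, ‖D k‖ ≤ M) : D 0 = 0 := by
  obtain ⟨N, hN⟩ := eventually_atTop.1 <| (tendsto_norm_zero.comp hc).eventually
    (eventually_le_nhds (by norm_num : (0 : ℝ) < 1 / 2))
  have halving : ∀ m k, N ≤ k → ‖D k‖ ≤ (1 / 2) ^ m * M := by
    intro m
    induction m with
    | zero => simpa using fun k _ => hD k
    | succ m ih =>
      intro k hk
      calc ‖D k‖ ≤ ‖c k‖ * ‖D (k + 1)‖ := by rw [hrec k]; exact norm_mul_le _ _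
        _ ≤ 1 / 2 * ((1 / 2) ^ m * M) :=
          mul_le_mul (hN k hk) (ih (k + 1) (by omega)) (norm_nonneg _) (by norm_num)
        _ = (1 / 2) ^ (m + 1) * M := by ring
  have hDN : D N = 0 := by
    refine norm_le_zero_iff.1 <|
      ge_of_tendsto (x := atTop) ?_ (Eventually.of_forall fun m => halving m N le_rfl)
    simpa using (tendsto_pow_atTop_nhds_zero_of_lt_one (by norm_num : (0 : ℝ) ≤ 1 / 2)
      (by norm_num)).mul_const M
  exact Nat.decreasingInduction (motive := fun k _ => D k = 0)
    (fun k _ h => by rw [hrec k, h, mul_zero]) hDN (Nat.zero_le N)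

noncomputable def fineTerm (b t q : ℂ) (n : ℕ) : ℂ := t ^ n / qPoch (b * q) q n

noncomputable def rogersFineTerm (b t q : ℂ) (n : ℕ) : ℂ :=
  b ^ n * t ^ n * q ^ (n ^ 2) / (qPoch (b * q) q n * qPoch t q (n + 1))

section RogersFine

variable {b t q : ℂ} {n : ℕ}

lemma fineTerm_succ_sub (h : qPoch (b * q) q (n + 1) ≠ 0) :
    fineTerm b t q (n + 1) - t * fineTerm b t q n =
      b * t * q / (1 - b * q) * fineTerm (b * q) (t * q) q n := by
  obtain ⟨hP, hw⟩ := mul_ne_zero_iff.1 (qPoch_succ (b * q) q n ▸ h)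
  obtain ⟨hbq, -⟩ := mul_ne_zero_iff.1 (qPoch_succ' (b * q) q n ▸ h)
  have hshift :
      qPoch (b * q * q) q n = qPoch (b * q) q n * (1 - b * q * q ^ n) / (1 - b * q) := by
    rw [← qPoch_succ, qPoch_succ', mul_div_cancel_left₀ _ hbq]
  simp only [fineTerm, qPoch_succ, hshift]
  field_simp
  ring

lemma one_sub_mul_rogersFineTerm_succ (ht : 1 - t ≠ 0) :
    (1 - t) * rogersFineTerm b t q (n + 1) =
      b * t * q / (1 - b * q) * rogersFineTerm (b * q) (t * q) q n := by
  simp only [rogersFineTerm, qPoch_succ' (b * q), qPoch_succ' t q (n + 1)]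
  field_simp
  ring

lemma fineTerm_zero : fineTerm b t q 0 = 1 := by
  simp [fineTerm, qPoch]

lemma rogersFineTerm_zero : rogersFineTerm b t q 0 = (1 - t)⁻¹ := by
  simp [rogersFineTerm, qPoch]

lemma norm_fineTerm_le {r : ℝ} (hb : ‖b‖ ≤ r) (ht : ‖t‖ ≤ r) (hr : r < 1) (hq : ‖q‖ < 1)
    (n : ℕ) : ‖fineTerm b t q n‖ ≤ Real.exp (r / ((1 - r) * (1 - ‖q‖))) * r ^ n := by
  have hbq : ‖b * q‖ ≤ r := (norm_mul_le_left_of_norm_le_one hq.le).trans hb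
  rw [fineTerm, div_eq_mul_inv, norm_mul, norm_pow, mul_comm]
  exact mul_le_mul (norm_inv_qPoch_le hbq hr hq n) (pow_le_pow_left₀ (norm_nonneg t) ht n)
    (by positivity) (by positivity)

lemma norm_rogersFineTerm_le {r : ℝ} (hb : ‖b‖ ≤ r) (ht : ‖t‖ ≤ r) (hr : r < 1) (hq : ‖q‖ < 1)
    (n : ℕ) : ‖rogersFineTerm b t q n‖ ≤ Real.exp (r / ((1 - r) * (1 - ‖q‖))) ^ 2 * r ^ n := by
  have hbq : ‖b * q‖ ≤ r := (norm_mul_le_left_of_norm_le_one hq.le).trans hb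
  have hr0 : 0 ≤ r := (norm_nonneg t).trans ht
  have hb1 : ‖b‖ ^ n ≤ 1 := pow_le_one₀ (norm_nonneg b) (hb.trans hr.le)
  have hq1 : ‖q‖ ^ (n ^ 2) ≤ 1 := pow_le_one₀ (norm_nonneg q) hq.le
  have hP := norm_inv_qPoch_le hbq hr hq n
  have hQ := norm_inv_qPoch_le ht hr hq (n + 1)
  calc ‖rogersFineTerm b t q n‖
      = ‖(qPoch (b * q) q n)⁻¹‖ * ‖(qPoch t q (n + 1))⁻¹‖ *
          (‖b‖ ^ n * ‖t‖ ^ n * ‖q‖ ^ (n ^ 2)) := by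
        rw [rogersFineTerm, div_eq_mul_inv, mul_inv, norm_mul, norm_mul, mul_comm]
        simp only [norm_mul, norm_pow]
    _ ≤ Real.exp (r / ((1 - r) * (1 - ‖q‖))) * Real.exp (r / ((1 - r) * (1 - ‖q‖))) *
          (1 * r ^ n * 1) := by gcongr
    _ = Real.exp (r / ((1 - r) * (1 - ‖q‖))) ^ 2 * r ^ n := by ring

lemma summable_fineTerm (hb : ‖b‖ < 1) (ht : ‖t‖ < 1) (hq : ‖q‖ < 1) :
    Summable (fineTerm b t q) :=
  .of_norm_bounded ((summable_geometric_of_lt_one (by positivity) (max_lt hb ht)).mul_left _)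
    (norm_fineTerm_le (le_max_left _ _) (le_max_right _ _) (max_lt hb ht) hq)

lemma summable_rogersFineTerm (hb : ‖b‖ < 1) (ht : ‖t‖ < 1) (hq : ‖q‖ < 1) :
    Summable (rogersFineTerm b t q) :=
  .of_norm_bounded ((summable_geometric_of_lt_one (by positivity) (max_lt hb ht)).mul_left _)
    (norm_rogersFineTerm_le (le_max_left _ _) (le_max_right _ _) (max_lt hb ht) hq)

lemma one_sub_mul_tsum_fineTerm (hb : ‖b‖ < 1) (ht : ‖t‖ < 1) (hq : ‖q‖ < 1) :
    (1 - t) * ∑' n, fineTerm b t q n =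
      1 + b * t * q / (1 - b * q) * ∑' n, fineTerm (b * q) (t * q) q n := by
  have hs := summable_fineTerm hb ht hq
  have hbq : ‖b * q‖ < 1 := (norm_mul_le_left_of_norm_le_one hq.le).trans_lt hb
  calc (1 - t) * ∑' n, fineTerm b t q n
      = fineTerm b t q 0 + ∑' n, (fineTerm b t q (n + 1) - t * fineTerm b t q n) := by
        rw [((summable_nat_add_iff 1).2 hs).tsum_sub (hs.mul_left t), tsum_mul_left]
        linear_combination hs.tsum_eq_zero_add
    _ = 1 + b * t * q / (1 - b * q) * ∑' n, fineTerm (b * q) (t * q) q n := by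
        rw [fineTerm_zero, ← tsum_mul_left]
        exact congrArg _ (tsum_congr fun n => fineTerm_succ_sub (qPoch_ne_zero hbq hq.le _))

lemma one_sub_mul_tsum_rogersFineTerm (hb : ‖b‖ < 1) (ht : ‖t‖ < 1) (hq : ‖q‖ < 1) :
    (1 - t) * ∑' n, rogersFineTerm b t q n =
      1 + b * t * q / (1 - b * q) * ∑' n, rogersFineTerm (b * q) (t * q) q n := by
  have ht1 : 1 - t ≠ 0 := sub_ne_zero.2 fun h => by simp [← h] at ht
  rw [(summable_rogersFineTerm hb ht hq).tsum_eq_zero_add, mul_add, ← tsum_mul_left,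
    ← tsum_mul_left, rogersFineTerm_zero, mul_inv_cancel₀ ht1]
  exact congrArg _ (tsum_congr fun n => one_sub_mul_rogersFineTerm_succ ht1)

lemma tsum_fineTerm_sub_tsum_rogersFineTerm (hb : ‖b‖ < 1) (ht : ‖t‖ < 1) (hq : ‖q‖ < 1) :
    ∑' n, fineTerm b t q n - ∑' n, rogersFineTerm b t q n =
      b * t * q / ((1 - t) * (1 - b * q)) *
        (∑' n, fineTerm (b * q) (t * q) q n - ∑' n, rogersFineTerm (b * q) (t * q) q n) := by
  have ht1 : 1 - t ≠ 0 := sub_ne_zero.2 fun h => by simp [← h] at ht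
  apply mul_left_cancel₀ ht1
  rw [mul_sub, one_sub_mul_tsum_fineTerm hb ht hq, one_sub_mul_tsum_rogersFineTerm hb ht hq]
  field_simp
  ring

end RogersFine

theorem tsum_fineTerm_eq_tsum_rogersFineTerm {b t q : ℂ} (hb : ‖b‖ < 1) (ht : ‖t‖ < 1)
    (hq : ‖q‖ < 1) : ∑' n, fineTerm b t q n = ∑' n, rogersFineTerm b t q n := by
  set D : ℕ → ℂ := fun k =>
    ∑' n, fineTerm (b * q ^ k) (t * q ^ k) q n - ∑' n, rogersFineTerm (b * q ^ k) (t * q ^ k) q n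
  set c : ℕ → ℂ := fun k =>
    b * q ^ k * (t * q ^ k) * q / ((1 - t * q ^ k) * (1 - b * q ^ k * q))
  have hqk := norm_pow_le_one_of_norm_le_one hq.le
  have hbk k : ‖b * q ^ k‖ ≤ ‖b‖ := norm_mul_le_left_of_norm_le_one (hqk k)
  have htk k : ‖t * q ^ k‖ ≤ ‖t‖ := norm_mul_le_left_of_norm_le_one (hqk k)
  have hrec k : D k = c k * D (k + 1) := by
    simpa only [D, c, pow_succ, mul_assoc] using
      tsum_fineTerm_sub_tsum_rogersFineTerm ((hbk k).trans_lt hb) ((htk k).trans_lt ht) hq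
  have hc : Tendsto c atTop (𝓝 0) := by
    have hz := tendsto_pow_atTop_nhds_zero_of_norm_lt_one hq
    simpa [c, Pi.div_def] using (((hz.const_mul b).mul (hz.const_mul t)).mul_const q).div
      ((tendsto_const_nhds.sub (hz.const_mul t)).mul
        (tendsto_const_nhds.sub ((hz.const_mul b).mul_const q))) (by simp)
  set r := max ‖b‖ ‖t‖
  have hr : r < 1 := max_lt hb ht
  have hr0 : 0 ≤ r := by positivity
  have hD k : ‖D k‖ ≤ Real.exp (r / ((1 - r) * (1 - ‖q‖))) * (1 - r)⁻¹ +
      Real.exp (r / ((1 - r) * (1 - ‖q‖))) ^ 2 * (1 - r)⁻¹ := by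
    have hb' : ‖b * q ^ k‖ ≤ r := (hbk k).trans (le_max_left _ _)
    have ht' : ‖t * q ^ k‖ ≤ r := (htk k).trans (le_max_right _ _)
    exact (norm_sub_le _ _).trans (add_le_add
      (norm_tsum_le_of_norm_le_geometric hr0 hr (norm_fineTerm_le hb' ht' hr hq))
      (norm_tsum_le_of_norm_le_geometric hr0 hr (norm_rogersFineTerm_le hb' ht' hr hq)))
  simpa [D] using sub_eq_zero.1 (eq_zero_of_eq_mul_succ hrec hc hD)

theorem omega_second_form (q : ℂ) (hq : ‖q‖ < 1) :
    (∑' n : ℕ, q ^ (2 * n * (n + 1)) / (qPoch q (q ^ 2) (n + 1)) ^ 2) =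
      ∑' n : ℕ, q ^ n / qPoch q (q ^ 2) (n + 1) := by
  have hq2 : ‖q ^ 2‖ < 1 := by rw [norm_pow]; exact pow_lt_one₀ (norm_nonneg q) hq two_ne_zero
  have lhs n : q ^ (2 * n * (n + 1)) / (qPoch q (q ^ 2) (n + 1)) ^ 2 =
      (1 - q)⁻¹ * rogersFineTerm q q (q ^ 2) n := by
    rw [rogersFineTerm, qPoch_succ']
    generalize 1 - q = u
    ring
  have rhs n : q ^ n / qPoch q (q ^ 2) (n + 1) = (1 - q)⁻¹ * fineTerm q q (q ^ 2) n := by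
    rw [fineTerm, qPoch_succ']
    generalize 1 - q = u
    ring
  simp only [lhs, rhs, tsum_mul_left, tsum_fineTerm_eq_tsum_rogersFineTerm hq hq hq2]
end

section
/- Let \alpha > 0 be real, set q = e^{-\alpha} and q_1 = e^{-\pi^2/\alpha}, and for each integer n \ge 0 define F_n(z) = 2\pi i \, \frac{e^{(2n+1)\pi i z - \alpha z^2 - 2\alpha z}}{1 - e^{-\alpha(2z+1)}}. Then for every integer n \ge 0, \int_{-\infty}^{\infty} F_n\!\left( x + \frac{(2n+1)\pi i}{2\alpha} - \frac{1}{2} \right) dx = -\pi i \, q^{-3/4} \, q_1^{(2n+1)^2/4} \int_{-\infty}^{\infty} \frac{e^{-\alpha x^2}}{\cosh(\alpha x)} \, dx, where q^{-3/4} = e^{3\alpha/4} and q_1^{(2n+1)^2/4} = e^{-\pi^2 (2n+1)^2/(4\alpha)}. -/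
open scoped BigOperators

/-- The function `F_n(z) = 2πi e^{(2n+1)πiz - αz² - 2αz} / (1 - e^{-α(2z+1)})`. -/
noncomputable def Fn (α : ℝ) (n : ℕ) (z : ℂ) : ℂ :=
  2 * Real.pi * Complex.I *
      Complex.exp ((2 * (n : ℂ) + 1) * Real.pi * Complex.I * z
        - (α : ℂ) * z ^ 2 - 2 * (α : ℂ) * z) /
    (1 - Complex.exp (-(α : ℂ) * (2 * z + 1)))

lemma exp_odd_pi_I (n : ℕ) : Complex.exp (-((2 * (n : ℂ) + 1) * Real.pi * Complex.I)) = -1 := by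
  have h : -((2 * (n : ℂ) + 1) * Real.pi * Complex.I)
      = ((2 * n + 1 : ℕ) : ℂ) * (-(Real.pi * Complex.I)) := by
    push_cast; ring
  rw [h, Complex.exp_nat_mul]
  have h2 : Complex.exp (-(Real.pi * Complex.I)) = -1 := by
    rw [Complex.exp_neg, Complex.exp_pi_mul_I]
    norm_num
  rw [h2, Odd.neg_one_pow ⟨n, by ring⟩]

lemma key_pointwise (α : ℝ) (hα : 0 < α) (n : ℕ) (x : ℝ) :
    Fn α n ((x : ℂ) + (2 * (n : ℂ) + 1) * Real.pi * Complex.I / (2 * α) - 1 / 2) =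
      -(Real.pi * Complex.I) * Complex.exp (3 * α / 4) *
        Complex.exp (-(Real.pi : ℂ) ^ 2 * (2 * (n : ℂ) + 1) ^ 2 / (4 * α)) *
        (Complex.exp (-(α : ℂ) * (x : ℂ) ^ 2) / Complex.cosh ((α : ℂ) * x)) := by
  have hα' : (α : ℂ) ≠ 0 := by exact_mod_cast hα.ne'
  set z : ℂ := (x : ℂ) + (2 * (n : ℂ) + 1) * Real.pi * Complex.I / (2 * α) - 1 / 2 with hz
  unfold Fn
  -- denominator
  have hden : Complex.exp (-(α : ℂ) * (2 * z + 1)) = -Complex.exp (-2 * α * x) := by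
    have h1 : -(α : ℂ) * (2 * z + 1)
        = (-2 * α * x) + -((2 * (n : ℂ) + 1) * Real.pi * Complex.I) := by
      rw [hz]; field_simp; ring
    rw [h1, Complex.exp_add, exp_odd_pi_I]; ring
  -- numerator exponent
  have hnum : (2 * (n : ℂ) + 1) * Real.pi * Complex.I * z - (α : ℂ) * z ^ 2 - 2 * α * z
      = (3 * α / 4 : ℂ) + (-(Real.pi : ℂ) ^ 2 * (2 * (n : ℂ) + 1) ^ 2 / (4 * α))
        + (-((2 * (n : ℂ) + 1) * Real.pi * Complex.I)) + (-(α : ℂ) * x ^ 2) + (-(α : ℂ) * x) := by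
    rw [hz]
    set u : ℂ := (2 * (n : ℂ) + 1) * Real.pi / (2 * α) with hu
    have hu1 : 2 * (α:ℂ) * u = (2 * (n : ℂ) + 1) * Real.pi := by
      rw [hu]; field_simp
    have hu2 : -(Real.pi : ℂ) ^ 2 * (2 * (n : ℂ) + 1) ^ 2 / (4 * α) = -(α:ℂ) * u ^ 2 := by
      rw [hu]; field_simp; ring
    have hzu : (x : ℂ) + (2 * (n : ℂ) + 1) * Real.pi * Complex.I / (2 * α) - 1 / 2
        = (x : ℂ) + u * Complex.I - 1 / 2 := by rw [hu]; ring
    rw [hzu, hu2, ← hu1]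
    linear_combination ((α:ℂ) * u ^ 2) * Complex.I_sq
  rw [hden, hnum]
  rw [Complex.exp_add, Complex.exp_add, Complex.exp_add, Complex.exp_add, exp_odd_pi_I]
  -- cosh facts
  have hcosh : Complex.cosh ((α : ℂ) * x)
      = (Complex.exp ((α : ℂ) * x) + Complex.exp (-((α : ℂ) * x))) / 2 := by
    rw [Complex.cosh]
  have hcosh_ne : Complex.cosh ((α : ℂ) * x) ≠ 0 := by
    have : ((α * x : ℝ) : ℂ) = (α : ℂ) * x := by push_cast; ring
    rw [← this, ← Complex.ofReal_cosh]
    exact_mod_cast (Real.cosh_pos (x := α * x)).ne'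
  have hden2 : (1 : ℂ) - -Complex.exp (-2 * α * x)
      = 2 * Complex.exp (-((α : ℂ) * x)) * Complex.cosh ((α : ℂ) * x) := by
    rw [hcosh]
    have h1 : Complex.exp (-((α:ℂ)*x)) * Complex.exp ((α:ℂ)*x) = 1 := by
      rw [← Complex.exp_add]; simp
    have h2 : Complex.exp (-((α:ℂ)*x)) * Complex.exp (-((α:ℂ)*x))
        = Complex.exp (-2 * (α:ℂ) * x) := by
      rw [← Complex.exp_add]; ring_nf
    linear_combination -h1 - h2
  rw [hden2]
  have hexp_ne : Complex.exp (-((α : ℂ) * x)) ≠ 0 := Complex.exp_ne_zero _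
  have hxx : Complex.exp (-(α : ℂ) * x) = Complex.exp (-((α : ℂ) * x)) := by ring_nf
  rw [hxx]
  field_simp

theorem shifted_line_integral (α : ℝ) (hα : 0 < α) (n : ℕ) :
    (∫ x : ℝ, Fn α n ((x : ℂ) + (2 * (n : ℂ) + 1) * Real.pi * Complex.I / (2 * α) - 1 / 2)) =
      -(Real.pi * Complex.I) * Complex.exp (3 * α / 4) *
        Complex.exp (-(Real.pi : ℂ) ^ 2 * (2 * (n : ℂ) + 1) ^ 2 / (4 * α)) *
        ∫ x : ℝ, Complex.exp (-(α : ℂ) * (x : ℂ) ^ 2) / Complex.cosh ((α : ℂ) * x) := by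
  simp_rw [key_pointwise α hα n, mul_assoc]
  rw [MeasureTheory.integral_const_mul, MeasureTheory.integral_const_mul,
    MeasureTheory.integral_const_mul]
end

section
/- The function \alpha \mapsto \int_{-\infty}^{\infty} \frac{e^{-\alpha x^2}}{\cosh(\alpha x)} \, dx is well defined (the integral converges absolutely) and holomorphic on the right half-plane \{\alpha \in \mathbb{C} : \operatorname{Re} \alpha > 0\}. -/
/-!
On a strip `r ≤ Re α`, `|Im α| ≤ M` with `r > 0`, `‖cosh (α x)‖` is bounded below by a positive
constant uniformly in `x ∈ ℝ`: by `‖cosh z‖² = sinh² (Re z) + cos² (Im z)`, the cosine term does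
it for small `|x|` and the sinh term for large `|x|`. Hence the integrand is dominated by a
Gaussian. Its `α`-derivative is `-(x² + x tanh (α x))` times the integrand, and
`cosh² - sinh² = 1` gives `‖tanh z‖ ≤ 1 + 1 / ‖cosh z‖`, so the derivative is dominated by
`(x² + C |x|) e^{-r x²}` near any point of the half-plane; differentiation under the integral sign
then gives holomorphy.
-/

open MeasureTheory Complex Topology

namespace Complex

theorem norm_cosh_sq (z : ℂ) : ‖cosh z‖ ^ 2 = Real.sinh z.re ^ 2 + Real.cos z.im ^ 2 := by
  have h : cosh z =
      (Real.cosh z.re * Real.cos z.im : ℝ) + (Real.sinh z.re * Real.sin z.im : ℝ) * I := by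
    conv_lhs => rw [← re_add_im z]
    rw [cosh_add, cosh_mul_I, sinh_mul_I, ← ofReal_cosh, ← ofReal_sinh, ← ofReal_cos,
      ← ofReal_sin]
    push_cast
    ring
  rw [h, ← normSq_eq_norm_sq, normSq_add_mul_I]
  nlinarith [Real.sin_sq_add_cos_sq z.im, Real.cosh_sq z.re]

theorem abs_sinh_re_le_norm_cosh (z : ℂ) : |Real.sinh z.re| ≤ ‖cosh z‖ :=
  abs_le_of_sq_le_sq (by nlinarith [norm_cosh_sq z, sq_nonneg (Real.cos z.im)]) (norm_nonneg _)

theorem abs_cos_im_le_norm_cosh (z : ℂ) : |Real.cos z.im| ≤ ‖cosh z‖ :=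
  abs_le_of_sq_le_sq (by nlinarith [norm_cosh_sq z, sq_nonneg (Real.sinh z.re)]) (norm_nonneg _)

theorem norm_sinh_le_norm_cosh_add_one (z : ℂ) : ‖sinh z‖ ≤ ‖cosh z‖ + 1 := by
  refine (sq_le_sq₀ (norm_nonneg _) (by positivity)).mp ?_
  calc ‖sinh z‖ ^ 2 = ‖cosh z ^ 2 - 1‖ := by rw [← norm_pow, sinh_sq]
    _ ≤ ‖cosh z‖ ^ 2 + 1 := (norm_sub_le _ _).trans_eq (by rw [norm_pow, norm_one])
    _ ≤ (‖cosh z‖ + 1) ^ 2 := by nlinarith [norm_nonneg (cosh z)]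

theorem norm_tanh_le {z : ℂ} {c : ℝ} (hc : 0 < c) (hz : c ≤ ‖cosh z‖) :
    ‖tanh z‖ ≤ 1 + c⁻¹ := by
  have hcosh : 0 < ‖cosh z‖ := hc.trans_le hz
  calc ‖tanh z‖ = ‖sinh z‖ / ‖cosh z‖ := by rw [tanh_eq_sinh_div_cosh, norm_div]
    _ ≤ (‖cosh z‖ + 1) / ‖cosh z‖ := by gcongr; exact norm_sinh_le_norm_cosh_add_one z
    _ = 1 + ‖cosh z‖⁻¹ := by field_simp
    _ ≤ 1 + c⁻¹ := by gcongr

theorem re_ge_and_abs_im_le_of_mem_ball {α₀ α : ℂ} {ε : ℝ} (h : α ∈ Metric.ball α₀ ε) :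
    α₀.re - ε ≤ α.re ∧ |α.im| ≤ |α₀.im| + ε := by
  rw [Metric.mem_ball, dist_eq] at h
  have hre := (abs_re_le_norm (α - α₀)).trans_lt h
  have him := (abs_im_le_norm (α - α₀)).trans_lt h
  rw [sub_re, abs_sub_lt_iff] at hre
  rw [sub_im] at him
  constructor
  · linarith
  · linarith [abs_sub_abs_le_abs_sub α.im α₀.im]

theorem exists_pos_le_norm_cosh_mul_ofReal {r M : ℝ} (hr : 0 < r) :
    ∃ c > 0, ∀ α : ℂ, r ≤ α.re → |α.im| ≤ M → ∀ x : ℝ, c ≤ ‖cosh (α * x)‖ := by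
  set K := |M| + 1
  have hK : 0 < K := by positivity
  refine ⟨min (Real.cos 1) (Real.sinh (r / K)),
    lt_min Real.cos_one_pos (Real.sinh_pos_iff.2 (by positivity)), fun α hre him x => ?_⟩
  rcases le_or_gt |x| K⁻¹ with hx | hx
  · have him_le : |(α * x).im| ≤ 1 := by
      calc |(α * x).im| = |α.im| * |x| := by simp [abs_mul]
        _ ≤ K * K⁻¹ := by gcongr; linarith [le_abs_self M]
        _ = 1 := mul_inv_cancel₀ hK.ne'
    calc min (Real.cos 1) (Real.sinh (r / K)) ≤ Real.cos 1 := min_le_left _ _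
      _ ≤ Real.cos |(α * x).im| := Real.cos_le_cos_of_nonneg_of_le_pi (abs_nonneg _)
          (by linarith [Real.pi_gt_three]) him_le
      _ ≤ |Real.cos (α * x).im| := by rw [Real.cos_abs]; exact le_abs_self _
      _ ≤ ‖cosh (α * x)‖ := abs_cos_im_le_norm_cosh _
  · have hre_ge : r / K ≤ |(α * x).re| := by
      calc r / K = r * K⁻¹ := div_eq_mul_inv r K
        _ ≤ α.re * |x| := by gcongr; linarith
        _ = |(α * x).re| := by simp [abs_mul, abs_of_pos (hr.trans_le hre)]
    calc min (Real.cos 1) (Real.sinh (r / K)) ≤ Real.sinh (r / K) := min_le_right _ _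
      _ ≤ Real.sinh |(α * x).re| := Real.sinh_le_sinh.2 hre_ge
      _ = |Real.sinh (α * x).re| := Real.abs_sinh _ |>.symm
      _ ≤ ‖cosh (α * x)‖ := abs_sinh_re_le_norm_cosh _

theorem cosh_mul_ofReal_ne_zero {α : ℂ} (hα : 0 < α.re) (x : ℝ) : cosh (α * x) ≠ 0 := by
  obtain ⟨c, hc, hle⟩ := exists_pos_le_norm_cosh_mul_ofReal (M := |α.im|) hα
  exact norm_pos_iff.mp (hc.trans_le (hle α le_rfl le_rfl x))

end Complex

namespace Mordell

noncomputable def integrand (α : ℂ) (x : ℝ) : ℂ := cexp (-α * x ^ 2) / cosh (α * x)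

theorem continuous_integrand {α : ℂ} (hα : 0 < α.re) : Continuous (integrand α) :=
  Continuous.div (by fun_prop) (by fun_prop) (cosh_mul_ofReal_ne_zero hα)

theorem norm_integrand_le {α : ℂ} {r c : ℝ} (hr : r ≤ α.re) (hc : 0 < c) (x : ℝ)
    (hx : c ≤ ‖cosh (α * x)‖) : ‖integrand α x‖ ≤ c⁻¹ * Real.exp (-r * x ^ 2) := by
  rw [integrand, norm_div, norm_cexp_neg_mul_sq, div_eq_inv_mul]
  gcongr

theorem integrable_integrand {α : ℂ} (hα : 0 < α.re) : Integrable (integrand α) := by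
  obtain ⟨c, hc, hle⟩ := exists_pos_le_norm_cosh_mul_ofReal (M := |α.im|) hα
  refine ((integrable_exp_neg_mul_sq hα).const_mul c⁻¹).mono'
    (continuous_integrand hα).aestronglyMeasurable (Filter.Eventually.of_forall fun x => ?_)
  exact norm_integrand_le le_rfl hc x (hle α le_rfl le_rfl x)

theorem hasDerivAt_integrand {α : ℂ} (x : ℝ) (hx : cosh (α * x) ≠ 0) :
    HasDerivAt (integrand · x) (-(x ^ 2 + x * tanh (α * x)) * integrand α x) α := by
  unfold integrand
  have hnum : HasDerivAt (fun a : ℂ => cexp (-a * x ^ 2)) (cexp (-α * x ^ 2) * -x ^ 2) α := by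
    simpa using ((hasDerivAt_id α).neg.mul_const ((x : ℂ) ^ 2)).cexp
  have hden : HasDerivAt (fun a : ℂ => cosh (a * x)) (sinh (α * x) * x) α :=
    (hasDerivAt_mul_const (x : ℂ)).ccosh
  refine (hnum.div hden hx).congr_deriv ?_
  rw [tanh_eq_sinh_div_cosh]
  field_simp
  ring

theorem norm_deriv_integrand_le {α : ℂ} {r c : ℝ} (hr : r ≤ α.re) (hc : 0 < c) (x : ℝ)
    (hx : c ≤ ‖cosh (α * x)‖) :
    ‖-(x ^ 2 + x * tanh (α * x)) * integrand α x‖ ≤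
      c⁻¹ * ((x ^ 2 + (1 + c⁻¹) * |x|) * Real.exp (-r * x ^ 2)) := by
  rw [norm_mul, norm_neg, mul_left_comm]
  gcongr
  · calc ‖(x : ℂ) ^ 2 + x * tanh (α * x)‖ ≤ ‖(x : ℂ) ^ 2‖ + ‖(x : ℂ) * tanh (α * x)‖ :=
          norm_add_le _ _
      _ = x ^ 2 + |x| * ‖tanh (α * x)‖ := by
          rw [norm_pow, norm_mul, norm_real, Real.norm_eq_abs, sq_abs]
      _ ≤ x ^ 2 + (1 + c⁻¹) * |x| := by
          rw [mul_comm (1 + c⁻¹)]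
          gcongr
          exact norm_tanh_le hc hx
  · exact norm_integrand_le hr hc x hx

theorem integrable_sq_add_mul_abs_mul_exp_neg_mul_sq {r : ℝ} (hr : 0 < r) (a : ℝ) :
    Integrable fun x : ℝ => (x ^ 2 + a * |x|) * Real.exp (-r * x ^ 2) := by
  have h2 : Integrable fun x : ℝ => x ^ 2 * Real.exp (-r * x ^ 2) := by
    simpa using integrable_rpow_mul_exp_neg_mul_sq hr (s := 2) (by norm_num)
  have h1 : Integrable fun x : ℝ => |x| * Real.exp (-r * x ^ 2) := by
    simpa [abs_mul] using (integrable_mul_exp_neg_mul_sq hr).abs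
  refine (h2.add (h1.const_mul a)).congr (Filter.Eventually.of_forall fun x => ?_)
  simp only [Pi.add_apply]
  ring

theorem hasDerivAt_integral_integrand {α₀ : ℂ} (hα₀ : 0 < α₀.re) :
    HasDerivAt (fun α => ∫ x : ℝ, integrand α x)
      (∫ x : ℝ, -(x ^ 2 + x * tanh (α₀ * x)) * integrand α₀ x) α₀ := by
  set r := α₀.re / 2 with hr_def
  have hr : 0 < r := half_pos hα₀
  obtain ⟨c, hc, hle⟩ := exists_pos_le_norm_cosh_mul_ofReal (M := |α₀.im| + r) hr
  have hball : ∀ α ∈ Metric.ball α₀ r, r ≤ α.re ∧ ∀ x : ℝ, c ≤ ‖cosh (α * x)‖ := by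
    intro α hα
    obtain ⟨hre, him⟩ := re_ge_and_abs_im_le_of_mem_ball hα
    have hre' : r ≤ α.re := by linarith
    exact ⟨hre', hle α hre' him⟩
  have hmeas : ∀ᶠ α in 𝓝 α₀, AEStronglyMeasurable (integrand α) :=
    (isOpen_lt continuous_const continuous_re |>.eventually_mem hα₀).mono
      fun α hα => (continuous_integrand hα).aestronglyMeasurable
  have hmeas' :
      AEStronglyMeasurable fun x : ℝ => -(x ^ 2 + x * tanh (α₀ * x)) * integrand α₀ x := by
    have htanh : Measurable fun x : ℝ => tanh (α₀ * x) := by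
      simp only [tanh_eq_sinh_div_cosh]
      fun_prop
    exact ((by fun_prop : Measurable fun x : ℝ => -(x ^ 2 + x * tanh (α₀ * x))).mul
      (continuous_integrand hα₀).measurable).aestronglyMeasurable
  refine (hasDerivAt_integral_of_dominated_loc_of_deriv_le
    (F' := fun α x => -(x ^ 2 + x * tanh (α * x)) * integrand α x)
    (Metric.ball_mem_nhds α₀ hr) hmeas
    (integrable_integrand hα₀) hmeas' ?_
    ((integrable_sq_add_mul_abs_mul_exp_neg_mul_sq hr (1 + c⁻¹)).const_mul c⁻¹) ?_).2
  · refine Filter.Eventually.of_forall fun x α hα => ?_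
    exact norm_deriv_integrand_le (hball α hα).1 hc x ((hball α hα).2 x)
  · refine Filter.Eventually.of_forall fun x α hα => ?_
    exact hasDerivAt_integrand x (norm_pos_iff.mp (hc.trans_le ((hball α hα).2 x)))

end Mordell

open Mordell in
theorem mordell_integral_holomorphic :
    (∀ α : ℂ, 0 < α.re →
        MeasureTheory.Integrable
          (fun x : ℝ => Complex.exp (-α * (x : ℂ) ^ 2) / Complex.cosh (α * x))) ∧
      DifferentiableOn ℂ
        (fun α : ℂ => ∫ x : ℝ, Complex.exp (-α * (x : ℂ) ^ 2) / Complex.cosh (α * x))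
        {α : ℂ | 0 < α.re} :=
  ⟨fun _ hα => integrable_integrand hα, fun _ hα₀ =>
    (hasDerivAt_integral_integrand hα₀).differentiableAt.differentiableWithinAt⟩
end
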